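/- Let Γ denote the gamma function, k = d - 1 ≥ 1, and n ≥ 2. Then the exact parametric complexity formula COMP(K) = log vol(K) - (k/2) log(πk) - (1/2) log(k/2) + (nk/2) log(nk/(2e)) - log Γ(k(n-1)/2) admits the asymptotic expansion COMP(K) = (d/2) log(n/(2π)) + log vol(K) - (3d² - 1)/(12(d-1)n) - d(d+1)/(12(d-1)n²) + O(n^{-3}) as n → ∞. -/

import Mathlib

/-!
Binet's form of Stirling's formula: for `z > 0`,
`log Γ(z) = (z - 1/2) log z - z + (1/2) log (2π) + μ(z)` with `μ(z) = ∑ⱼ g(z + j)` and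
`g(y) = (y + 1/2) log (1 + 1/y) - 1 = ∑_{k ≥ 1} (2y + 1)^(-2k) / (2k + 1)`.
The series for `g` gives `1/(3(2y+1)²) ≤ g(y) ≤ 1/(12y(y+1))`, and comparing with telescoping
series gives `0 ≤ 1/(12z) - μ(z) ≤ 1/(144z³)`. The formula itself holds because
`(x - 1/2) log x - x + μ(x)` satisfies the functional equation of `log Γ`, so the Gauss limit of
`log Γ` reduces it to Stirling's formula for `n!`.

Substituting `z = k(n-1)/2` into Binet's formula and expanding `log(1 - 1/n)` to third order,
everything cancels exactly except terms of size `O(n⁻³)`.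
-/

open Real Filter Asymptotics Topology
open scoped Nat

lemma hasSum_sub_succ_of_antitone {a : ℕ → ℝ} (ha : Antitone a) (h : Tendsto a atTop (𝓝 0)) :
    HasSum (fun n => a n - a (n + 1)) (a 0) := by
  rw [hasSum_iff_tendsto_nat_of_nonneg fun n => sub_nonneg.2 (ha n.le_succ)]
  simp only [Finset.sum_range_sub']
  simpa using tendsto_const_nhds.sub h

lemma hasSum_inv_pow_sub_inv_pow_add_one {x : ℝ} (hx : 0 < x) {p : ℕ} (hp : p ≠ 0) :
    HasSum (fun j : ℕ => ((x + j) ^ p)⁻¹ - ((x + j + 1) ^ p)⁻¹) (x ^ p)⁻¹ := by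
  have hanti : Antitone fun j : ℕ => ((x + j) ^ p)⁻¹ := fun m n hmn => by
    dsimp only
    gcongr
  have hlim : Tendsto (fun j : ℕ => ((x + j) ^ p)⁻¹) atTop (𝓝 0) :=
    ((tendsto_pow_atTop hp).comp
      (tendsto_atTop_add_const_left _ x tendsto_natCast_atTop_atTop)).inv_tendsto_atTop
  simpa [add_assoc] using hasSum_sub_succ_of_antitone hanti hlim

noncomputable def binetTerm (y : ℝ) : ℝ := (y + 1 / 2) * log (1 + y⁻¹) - 1

lemma hasSum_binetTerm {y : ℝ} (hy : 0 < y) :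
    HasSum (fun k : ℕ => (2 * y + 1)⁻¹ ^ (2 * (k + 1)) / (2 * (k + 1) + 1)) (binetTerm y) := by
  have hs := (hasSum_log_one_add_inv hy).mul_left (y + 1 / 2)
  have hterm : ∀ k : ℕ, (y + 1 / 2) * (2 * (1 / (2 * k + 1)) * (1 / (2 * y + 1)) ^ (2 * k + 1))
      = (2 * y + 1)⁻¹ ^ (2 * k) / (2 * k + 1) := fun k => by
    rw [pow_succ, one_div (2 * y + 1)]
    field_simp
  simp only [hterm] at hs
  simpa [binetTerm] using (hasSum_nat_add_iff' 1).mpr hs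

lemma inv_three_mul_sq_le_binetTerm {y : ℝ} (hy : 0 < y) :
    (3 * (2 * y + 1) ^ 2)⁻¹ ≤ binetTerm y := by
  refine le_of_eq_of_le ?_ (le_hasSum (hasSum_binetTerm hy) 0 fun k _ => by positivity)
  norm_num
  ring

lemma binetTerm_nonneg {y : ℝ} (hy : 0 < y) : 0 ≤ binetTerm y :=
  (by positivity : (0 : ℝ) ≤ _).trans (inv_three_mul_sq_le_binetTerm hy)

lemma binetTerm_le {y : ℝ} (hy : 0 < y) : binetTerm y ≤ (y⁻¹ - (y + 1)⁻¹) / 12 := by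
  set u := (2 * y + 1)⁻¹ with hu
  have hu1 : 1 - u ^ 2 = 4 * y * (y + 1) * u ^ 2 := by
    rw [hu]
    field_simp
    ring
  have hu2 : u ^ 2 < 1 := by
    have : 0 < 4 * y * (y + 1) * u ^ 2 := by positivity
    linarith
  have hgeom := (hasSum_geometric_of_lt_one (by positivity) hu2).mul_left (u ^ 2 / 3)
  refine (hasSum_le (fun k => ?_) (hasSum_binetTerm hy) hgeom).trans_eq ?_
  · rw [show u ^ 2 / 3 * (u ^ 2) ^ k = u ^ (2 * (k + 1)) / 3 by ring]
    gcongr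
    linarith [k.cast_nonneg (α := ℝ)]
  · have hu0 : u ≠ 0 := by positivity
    rw [hu1]
    field_simp
    ring

lemma sub_binetTerm_le {y : ℝ} (hy : 0 < y) :
    (y⁻¹ - (y + 1)⁻¹) / 12 - binetTerm y ≤ ((y ^ 3)⁻¹ - ((y + 1) ^ 3)⁻¹) / 144 := by
  have key : (y⁻¹ - (y + 1)⁻¹) / 12 - (3 * (2 * y + 1) ^ 2)⁻¹
      ≤ ((y ^ 3)⁻¹ - ((y + 1) ^ 3)⁻¹) / 144 := by
    rw [← sub_nonneg]
    have e : ((y ^ 3)⁻¹ - ((y + 1) ^ 3)⁻¹) / 144 - ((y⁻¹ - (y + 1)⁻¹) / 12 - (3 * (2 * y + 1) ^ 2)⁻¹)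
        = (7 * y * (y + 1) + 1) / (144 * y ^ 3 * (y + 1) ^ 3 * (2 * y + 1) ^ 2) := by
      field_simp
      ring
    rw [e]
    positivity
  linarith [inv_three_mul_sq_le_binetTerm hy]

noncomputable def binetRemainder (x : ℝ) : ℝ := ∑' j : ℕ, binetTerm (x + j)

lemma summable_binetTerm {x : ℝ} (hx : 0 < x) : Summable fun j : ℕ => binetTerm (x + j) :=
  ((hasSum_inv_pow_sub_inv_pow_add_one hx one_ne_zero).div_const 12).summable.of_nonneg_of_le
    (fun j => binetTerm_nonneg (by positivity))
    fun j => by simpa using binetTerm_le (y := x + j) (by positivity)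

lemma binetRemainder_nonneg {x : ℝ} (hx : 0 < x) : 0 ≤ binetRemainder x :=
  tsum_nonneg fun j => binetTerm_nonneg (by positivity)

lemma binetRemainder_le {x : ℝ} (hx : 0 < x) : binetRemainder x ≤ x⁻¹ / 12 := by
  have h := (hasSum_inv_pow_sub_inv_pow_add_one hx one_ne_zero).div_const 12
  simp only [pow_one] at h
  exact hasSum_le (fun j => binetTerm_le (by positivity)) (summable_binetTerm hx).hasSum h

lemma inv_div_sub_binetRemainder_le {x : ℝ} (hx : 0 < x) :
    x⁻¹ / 12 - binetRemainder x ≤ (x ^ 3)⁻¹ / 144 := by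
  have h := (hasSum_inv_pow_sub_inv_pow_add_one hx one_ne_zero).div_const 12
  simp only [pow_one] at h
  exact hasSum_le (fun j => sub_binetTerm_le (by positivity)) (h.sub (summable_binetTerm hx).hasSum)
    ((hasSum_inv_pow_sub_inv_pow_add_one hx three_ne_zero).div_const 144)

lemma binetRemainder_eq_binetTerm_add {x : ℝ} (hx : 0 < x) :
    binetRemainder x = binetTerm x + binetRemainder (x + 1) := by
  rw [binetRemainder, (summable_binetTerm hx).tsum_eq_zero_add]
  simp [binetRemainder, add_assoc, add_comm (1 : ℝ)]

lemma isBigO_inv_div_sub_binetRemainder :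
    (fun x => x⁻¹ / 12 - binetRemainder x) =O[atTop] fun x => x⁻¹ ^ 3 := by
  refine IsBigO.of_bound (144⁻¹) ?_
  filter_upwards [eventually_gt_atTop 0] with x hx
  rw [norm_of_nonneg (sub_nonneg.2 (binetRemainder_le hx)), norm_of_nonneg (by positivity), inv_pow]
  linarith [inv_div_sub_binetRemainder_le hx]

lemma tendsto_add_natCast_add_one (x : ℝ) : Tendsto (fun n : ℕ => x + n + 1) atTop atTop :=
  tendsto_atTop_add_const_right _ 1 (tendsto_atTop_add_const_left _ x tendsto_natCast_atTop_atTop)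

lemma tendsto_binetRemainder_add_natCast_add_one (x : ℝ) (hx : 0 < x) :
    Tendsto (fun n : ℕ => binetRemainder (x + n + 1)) atTop (𝓝 0) := by
  have h := (tendsto_inv_atTop_zero.comp (tendsto_add_natCast_add_one x)).div_const 12
  rw [zero_div] at h
  exact squeeze_zero (fun n => binetRemainder_nonneg (by positivity))
    (fun n => binetRemainder_le (by positivity)) h

lemma tendsto_add_mul_log_one_add_div (a c : ℝ) :
    Tendsto (fun t : ℝ => (t + c) * log (1 + a / t)) atTop (𝓝 a) := by
  have h1 : Tendsto (fun t : ℝ => 1 + a / t) atTop (𝓝 1) := by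
    simpa using tendsto_const_nhds.add (tendsto_const_nhds (x := a).div_atTop tendsto_id)
  have h : Tendsto (fun t : ℝ => log (1 + a / t)) atTop (𝓝 0) := by
    simpa [Function.comp_def] using ((continuousAt_log one_ne_zero).tendsto).comp h1
  simpa [add_mul] using (tendsto_mul_log_one_add_div_atTop a).add (h.const_mul c)

lemma tendsto_log_factorial_sub_stirling (x : ℝ) :
    Tendsto (fun n : ℕ => x * log n + log n ! - ((x + n + 1 - 1 / 2) * log (x + n + 1) - (x + n + 1)))
      atTop (𝓝 (log (2 * π) / 2)) := by
  have hst : Tendsto (fun n : ℕ => log (Stirling.stirlingSeq n)) atTop (𝓝 (log π / 2)) := by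
    rw [← log_sqrt pi_pos.le]
    exact ((continuousAt_log (by positivity)).tendsto).comp Stirling.tendsto_stirlingSeq_sqrt_pi
  have hlog := (tendsto_add_mul_log_one_add_div (x + 1) (x + 1 / 2)).comp tendsto_natCast_atTop_atTop
  have hlim := (hst.add_const (log 2 / 2 + (x + 1))).sub hlog
  rw [show log π / 2 + (log 2 / 2 + (x + 1)) - (x + 1) = log (2 * π) / 2 by
    rw [log_mul two_ne_zero pi_pos.ne']; ring] at hlim
  refine hlim.congr' ?_
  filter_upwards [eventually_gt_atTop 0, (tendsto_add_natCast_add_one x).eventually_gt_atTop 0]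
    with n hn hxn
  have hn' : (0 : ℝ) < n := by exact_mod_cast hn
  have h1 : log (1 + (x + 1) / n) = log (x + n + 1) - log n := by
    rw [← log_div hxn.ne' hn'.ne']
    congr 1
    field_simp
    ring
  have h2 := Stirling.log_stirlingSeq_formula n
  rw [log_mul two_ne_zero hn'.ne', log_div hn'.ne' (exp_ne_zero 1), log_exp] at h2
  simp only [Function.comp_apply, h1, h2]
  ring

theorem log_Gamma_eq_binet {x : ℝ} (hx : 0 < x) :
    log (Gamma x) = (x - 1 / 2) * log x - x + log (2 * π) / 2 + binetRemainder x := by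
  set f : ℝ → ℝ := fun y => (y - 1 / 2) * log y - y + binetRemainder y with hf
  have hfeq : ∀ {y : ℝ}, 0 < y → f (y + 1) = f y + log y := fun {y} hy => by
    have h : log (1 + y⁻¹) = log (y + 1) - log y := by
      rw [← log_div (by positivity) hy.ne', add_div, div_self hy.ne', one_div]
    simp only [hf, binetRemainder_eq_binetTerm_add hy, binetTerm, h]
    ring
  have hseq : ∀ n : ℕ, BohrMollerup.logGammaSeq x n = x * log n + log n ! -
      ((x + n + 1 - 1 / 2) * log (x + n + 1) - (x + n + 1)) - binetRemainder (x + n + 1) + f x := by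
    intro n
    have h := BohrMollerup.f_add_nat_eq hfeq hx (n + 1)
    push_cast at h
    rw [← add_assoc] at h
    simp only [hf] at h ⊢
    rw [BohrMollerup.logGammaSeq]
    linarith
  have hlim := ((tendsto_log_factorial_sub_stirling x).sub
    (tendsto_binetRemainder_add_natCast_add_one x hx)).add_const (f x)
  rw [tendsto_nhds_unique (BohrMollerup.tendsto_log_gamma hx) (hlim.congr fun n => (hseq n).symm)]
  ring

lemma isBigO_sum_range_add_log_one_sub (m : ℕ) :
    (fun y : ℝ => ∑ i ∈ Finset.range m, y ^ (i + 1) / (i + 1) + log (1 - y)) =O[𝓝 0]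
      fun y => y ^ (m + 1) := by
  refine IsBigO.of_bound 2 ?_
  filter_upwards [Metric.ball_mem_nhds (0 : ℝ) (by norm_num : (0 : ℝ) < 1 / 2)] with y hy
  rw [Metric.mem_ball, dist_zero_right, norm_eq_abs] at hy
  rw [norm_eq_abs, norm_pow, norm_eq_abs]
  refine (abs_log_sub_add_sum_range_le (by linarith) m).trans ?_
  rw [div_le_iff₀ (by linarith)]
  nlinarith [pow_nonneg (abs_nonneg y) (m + 1)]

lemma isBigO_inv_mul_sub_one_div_two (k : ℝ) (hk : 0 < k) :
    (fun x : ℝ => (k * (x - 1) / 2)⁻¹) =O[atTop] fun x => x⁻¹ := by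
  refine IsBigO.of_bound (4 / k) ?_
  filter_upwards [eventually_ge_atTop 2] with x hx
  have hz : k * x / 4 ≤ k * (x - 1) / 2 := by nlinarith
  have hz0 : 0 < k * (x - 1) / 2 := by nlinarith
  rw [norm_inv, norm_inv, norm_of_nonneg hz0.le, norm_of_nonneg (by positivity)]
  calc (k * (x - 1) / 2)⁻¹ ≤ (k * x / 4)⁻¹ := inv_anti₀ (by positivity) hz
    _ = 4 / k * x⁻¹ := by field_simp

noncomputable def parametricComplexity (k V x : ℝ) : ℝ :=
  log V - (k / 2) * log (π * k) - (1 / 2) * log (k / 2) +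
    (x * k / 2) * log (x * k / (2 * exp 1)) - log (Gamma (k * (x - 1) / 2))

noncomputable def parametricComplexityExpansion (k V x : ℝ) : ℝ :=
  ((k + 1) / 2) * log (x / (2 * π)) + log V - (3 * (k + 1) ^ 2 - 1) / (12 * k * x) -
    (k + 1) * (k + 2) / (12 * k * x ^ 2)

lemma parametricComplexity_sub_expansion_eq {k x : ℝ} (hk : 0 < k) (hx : 1 < x) (V : ℝ) :
    parametricComplexity k V x - parametricComplexityExpansion k V x =
      -((k + 1) / 6) * x⁻¹ ^ 3 - 12⁻¹ * (x⁻¹ ^ 2 * (k * (x - 1) / 2)⁻¹)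
        - (k * (x - 1) / 2 - 1 / 2) *
          (∑ i ∈ Finset.range 3, x⁻¹ ^ (i + 1) / (i + 1) + log (1 - x⁻¹))
        + ((k * (x - 1) / 2)⁻¹ / 12 - binetRemainder (k * (x - 1) / 2)) := by
  have hx0 : 0 < x := by linarith
  have hz : 0 < k * (x - 1) / 2 := by nlinarith
  have h1 : 0 < 1 - x⁻¹ := sub_pos.2 (inv_lt_one_of_one_lt₀ hx)
  have hlogz : log (k * (x - 1) / 2) = log k + log x + log (1 - x⁻¹) - log 2 := by
    rw [show k * (x - 1) / 2 = k * x * (1 - x⁻¹) / 2 by field_simp, log_div (by positivity) two_ne_zero,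
      log_mul (by positivity) h1.ne', log_mul hk.ne' hx0.ne']
  rw [parametricComplexity, parametricComplexityExpansion, log_Gamma_eq_binet hz, hlogz,
    log_mul pi_pos.ne' hk.ne', log_div hk.ne' two_ne_zero,
    log_div (by positivity) (by positivity), log_mul hx0.ne' hk.ne',
    log_mul two_ne_zero (exp_ne_zero 1), log_exp, log_div hx0.ne' (by positivity),
    log_mul two_ne_zero pi_pos.ne']
  generalize log (1 - x⁻¹) = L
  generalize binetRemainder (k * (x - 1) / 2) = M
  have hx1 : x - 1 ≠ 0 := by linarith
  norm_num [Finset.sum_range_succ]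
  field_simp
  ring

theorem isBigO_parametricComplexity_sub_expansion {k : ℝ} (hk : 0 < k) (V : ℝ) :
    (fun x => parametricComplexity k V x - parametricComplexityExpansion k V x) =O[atTop]
      fun x => (x ^ 3)⁻¹ := by
  have hz : Tendsto (fun x : ℝ => k * (x - 1) / 2) atTop atTop :=
    ((tendsto_atTop_add_const_right _ (-1) tendsto_id).const_mul_atTop hk).atTop_div_const two_pos
  have hzinv := isBigO_inv_mul_sub_one_div_two k hk
  have hzlin : (fun x : ℝ => k * (x - 1) / 2 - 1 / 2) =O[atTop] fun x => x :=
    (((isBigO_refl _ _).const_mul_left (k / 2)).sub (isLittleO_const_id_atTop ((k + 1) / 2)).isBigO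
      ).congr_left fun x => by simp only [id]; ring
  have hrat : (fun x : ℝ => -((k + 1) / 6) * x⁻¹ ^ 3 - 12⁻¹ * (x⁻¹ ^ 2 * (k * (x - 1) / 2)⁻¹))
      =O[atTop] fun x => x⁻¹ ^ 3 :=
    ((isBigO_refl _ _).const_mul_left _).sub
      (((isBigO_refl (fun x : ℝ => x⁻¹ ^ 2) _).mul hzinv).const_mul_left _ |>.congr_right
        fun x => (pow_succ _ 2).symm)
  have hlog : (fun x : ℝ => (k * (x - 1) / 2 - 1 / 2) *
      (∑ i ∈ Finset.range 3, x⁻¹ ^ (i + 1) / (i + 1) + log (1 - x⁻¹))) =O[atTop]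
        fun x => x⁻¹ ^ 3 :=
    (hzlin.mul ((isBigO_sum_range_add_log_one_sub 3).comp_tendsto tendsto_inv_atTop_zero)).congr_right
      fun x => by
        rcases eq_or_ne x 0 with rfl | hx
        · simp
        · simp only [Function.comp_apply]
          rw [pow_succ _ 3, mul_comm, mul_assoc, inv_mul_cancel₀ hx, mul_one]
  have hbinet := (isBigO_inv_div_sub_binetRemainder.comp_tendsto hz).trans (hzinv.pow 3)
  refine (((hrat.sub hlog).add hbinet).congr' ?_ (.of_forall fun x => inv_pow x 3))
  filter_upwards [eventually_gt_atTop 1] with x hx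
  exact (parametricComplexity_sub_expansion_eq hk hx V).symm

theorem stmt_17_general (k : ℕ) (hk : 1 ≤ k) (V : ℝ) :
    (fun n : ℕ =>
        (Real.log V - ((k : ℝ) / 2) * Real.log (π * k) - (1 / 2) * Real.log ((k : ℝ) / 2) +
            ((n : ℝ) * k / 2) * Real.log ((n : ℝ) * k / (2 * Real.exp 1)) -
            Real.log (Real.Gamma ((k : ℝ) * ((n : ℝ) - 1) / 2))) -
          ((((k : ℝ) + 1) / 2) * Real.log ((n : ℝ) / (2 * π)) + Real.log V -
            (3 * ((k : ℝ) + 1) ^ 2 - 1) / (12 * (k : ℝ) * n) -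
            ((k : ℝ) + 1) * ((k : ℝ) + 2) / (12 * (k : ℝ) * (n : ℝ) ^ 2))) =O[atTop]
      fun n : ℕ => ((n : ℝ) ^ 3)⁻¹ :=
  (isBigO_parametricComplexity_sub_expansion (by exact_mod_cast hk) V).comp_tendsto
    tendsto_natCast_atTop_atTop

/-- With `Γ` the gamma function, `k = d - 1 ≥ 1` and `V = vol(K)` a
constant, the exact parametric complexity
`COMP(K) = log V - (k/2) log(πk) - (1/2) log(k/2) + (nk/2) log(nk/(2e)) - log Γ(k(n-1)/2)`
admits the asymptotic expansion
`COMP(K) = (d/2) log(n/(2π)) + log V - (3d²-1)/(12(d-1)n) - d(d+1)/(12(d-1)n²) + O(n⁻³)`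
as `n → ∞`. -/
theorem stmt_17 (k : ℕ) (hk : 1 ≤ k) (V : ℝ) (hV : 0 < V) :
    (fun n : ℕ =>
        (Real.log V - ((k : ℝ) / 2) * Real.log (π * k) - (1 / 2) * Real.log ((k : ℝ) / 2) +
            ((n : ℝ) * k / 2) * Real.log ((n : ℝ) * k / (2 * Real.exp 1)) -
            Real.log (Real.Gamma ((k : ℝ) * ((n : ℝ) - 1) / 2))) -
          ((((k : ℝ) + 1) / 2) * Real.log ((n : ℝ) / (2 * π)) + Real.log V -
            (3 * ((k : ℝ) + 1) ^ 2 - 1) / (12 * (k : ℝ) * n) -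
            ((k : ℝ) + 1) * ((k : ℝ) + 2) / (12 * (k : ℝ) * (n : ℝ) ^ 2))) =O[atTop]
      fun n : ℕ => ((n : ℝ) ^ 3)⁻¹ :=
  stmt_17_general k hk V
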